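/- arXiv:1910.00168 — 2 statements merged into one kernel-verified Lean document; each statement's English description precedes it below -/
import Mathlib

section
/- For the cycle C_n (n ≥ 3) and any ℓ ≥ 2, the ℓ-forcing number equals n. -/
open SimpleGraph

/-- The set of vertices that eventually become colored in the leaky zero forcing process
on graph `G` with leaks `L` and initially colored set `S`. -/
inductive SimpleGraph.LeakyForces {V : Type*} (G : SimpleGraph V) (L S : Set V) : V → Prop
  | init (v : V) (hv : v ∈ S) : SimpleGraph.LeakyForces G L S v
  | force (u v : V) (hu : u ∉ L) (hcu : SimpleGraph.LeakyForces G L S u) (huv : G.Adj u v)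
      (hall : ∀ w, G.Adj u w → w ≠ v → SimpleGraph.LeakyForces G L S w) :
      SimpleGraph.LeakyForces G L S v

/-- `S` is an `ℓ`-forcing set: for every placement of (at most) `ℓ` leaks, starting from `S`
colored, every vertex eventually becomes colored. -/
def SimpleGraph.IsLeakyForcingSet {V : Type*} (G : SimpleGraph V) (ℓ : ℕ) (S : Set V) : Prop :=
  ∀ L : Finset V, L.card ≤ ℓ → ∀ v, G.LeakyForces ↑L S v

/-- The `ℓ`-forcing number `Z_{(ℓ)}(G)`: minimum size of an `ℓ`-forcing set. -/
noncomputable def SimpleGraph.leakyForcingNumber {V : Type*} (G : SimpleGraph V) (ℓ : ℕ) : ℕ :=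
  sInf {k | ∃ S : Finset V, S.card = k ∧ G.IsLeakyForcingSet ℓ ↑S}

/-!
An uncolored vertex `v` can only be colored by a force from one of its neighbours. If the
maximum degree is at most `ℓ`, the adversary puts a leak on every neighbour of `v`, so no
such force ever happens: every `ℓ`-forcing set contains every vertex. On the cycle all degrees
are `2 ≤ ℓ`.
-/

namespace SimpleGraph

variable {V : Type*} {G : SimpleGraph V} {ℓ : ℕ}

theorem LeakyForces.mem_of_neighborSet_subset {L S : Set V} {v : V} (h : G.LeakyForces L S v)
    (hL : G.neighborSet v ⊆ L) : v ∈ S := by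
  cases h with
  | init _ hv => exact hv
  | force u _ hu _ huv _ => exact absurd (hL (G.adj_symm huv)) hu

theorem isLeakyForcingSet_univ : G.IsLeakyForcingSet ℓ Set.univ :=
  fun _ _ v => .init v trivial

theorem IsLeakyForcingSet.eq_univ [G.LocallyFinite] {S : Set V} (hdeg : ∀ v, G.degree v ≤ ℓ)
    (hS : G.IsLeakyForcingSet ℓ S) : S = Set.univ :=
  Set.eq_univ_of_forall fun v =>
    (hS (G.neighborFinset v) (hdeg v) v).mem_of_neighborSet_subset (by simp)

theorem leakyForcingNumber_eq_card [Fintype V] [G.LocallyFinite] (hdeg : ∀ v, G.degree v ≤ ℓ) :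
    G.leakyForcingNumber ℓ = Fintype.card V := by
  have hsizes : {k | ∃ S : Finset V, S.card = k ∧ G.IsLeakyForcingSet ℓ ↑S} =
      {Fintype.card V} := by
    ext k
    constructor
    · rintro ⟨S, rfl, hS⟩
      rw [Finset.coe_eq_univ.mp (hS.eq_univ hdeg)]
      exact Finset.card_univ
    · rintro rfl
      exact ⟨Finset.univ, Finset.card_univ, by simpa using isLeakyForcingSet_univ⟩
  rw [leakyForcingNumber, hsizes, csInf_singleton]

end SimpleGraph

theorem cycle_ell_forcing (n : ℕ) (hn : 3 ≤ n) (ℓ : ℕ) (hℓ : 2 ≤ ℓ) :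
    (SimpleGraph.cycleGraph n).leakyForcingNumber ℓ = n := by
  obtain ⟨m, rfl⟩ : ∃ m, n = m + 3 := ⟨n - 3, by omega⟩
  rw [leakyForcingNumber_eq_card fun v => cycleGraph_degree_three_le.trans_le hℓ,
    Fintype.card_fin]
end

section
/- The 2-forcing number of the 3-dimensional hypercube Q_3 equals 6. In particular, the complement of any pair of vertices at distance 2 in Q_3 fails to be a 2-forcing set, so every pair of vertices at distance 2 is a 2-forcing fort. -/
open SimpleGraph

/-- The `d`-dimensional hypercube: vertices are binary strings of length `d`, adjacent
iff they differ in exactly one coordinate. -/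
def hypercubeGraph (d : ℕ) : SimpleGraph (Fin d → Bool) where
  Adj x y := (Finset.univ.filter fun i => x i ≠ y i).card = 1
  symm := by
    constructor
    intro x y h
    have he : (Finset.univ.filter fun i => y i ≠ x i)
        = (Finset.univ.filter fun i => x i ≠ y i) := by
      apply Finset.filter_congr
      intro i _
      simp [ne_comm]
    rw [he]
    exact h
  loopless := by
    constructor
    intro x h
    simp at h

/-!
A set of colored vertices can never force into a *fort* `F`: a set such that no unleaked
vertex outside `F` has exactly one neighbour in `F`. In `Q₃`, if `u` and `v` are at distance 2,
they have two common neighbours, and each of them has exactly one further neighbour, namely the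
antipode of the other. Leaking those two antipodes makes `{u, v}` a fort, so a 2-forcing set
meets every pair at distance 2; since any three vertices of `Q₃` contain such a pair, a
2-forcing set misses at most two vertices. Conversely, running the forcing process for every
placement of at most two leaks shows that the complement of an antipodal pair is 2-forcing.
-/

namespace SimpleGraph

variable {V : Type*} {G : SimpleGraph V}

theorem LeakyForces.mono_right {L S S' : Set V} (hS : S ⊆ S') {v : V}
    (h : G.LeakyForces L S v) : G.LeakyForces L S' v := by
  induction h with
  | init v hv => exact .init v (hS hv)
  | force u v hu _ huv _ ihu ihall => exact .force u v hu ihu huv ihall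

theorem IsLeakyForcingSet.mono {ℓ : ℕ} {S S' : Set V} (h : G.IsLeakyForcingSet ℓ S)
    (hS : S ⊆ S') : G.IsLeakyForcingSet ℓ S' :=
  fun L hL v => (h L hL v).mono_right hS

def IsLeakyFort (G : SimpleGraph V) (L F : Set V) : Prop :=
  ∀ u ∉ F, u ∉ L → ∀ v ∈ F, G.Adj u v → ∃ w ∈ F, w ≠ v ∧ G.Adj u w

theorem LeakyForces.notMem_of_isLeakyFort {L F S : Set V} (hF : G.IsLeakyFort L F)
    (hS : Disjoint S F) {v : V} (h : G.LeakyForces L S v) : v ∉ F := by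
  induction h with
  | init v hv => exact hS.notMem_of_mem_left hv
  | force u v hu _ huv _ ihu ihall =>
    intro hv
    obtain ⟨w, hw, hwv, huw⟩ := hF u ihu hu v hv huv
    exact ihall w huw hwv hw

theorem not_isLeakyForcingSet_of_isLeakyFort {ℓ : ℕ} {S F : Set V} (L : Finset V)
    (hL : L.card ≤ ℓ) (hF : G.IsLeakyFort L F) (hFne : F.Nonempty) (hS : Disjoint S F) :
    ¬ G.IsLeakyForcingSet ℓ S := fun h =>
  have ⟨v, hv⟩ := hFne
  (h L hL v).notMem_of_isLeakyFort hF hS hv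

theorem leakyForcingNumber_eq {ℓ : ℕ} (S : Finset V) (hS : G.IsLeakyForcingSet ℓ S)
    (hmin : ∀ T : Finset V, G.IsLeakyForcingSet ℓ T → S.card ≤ T.card) :
    G.leakyForcingNumber ℓ = S.card :=
  le_antisymm (Nat.sInf_le ⟨S, rfl, hS⟩)
    (le_csInf ⟨_, S, rfl, hS⟩ fun _ ⟨T, hT, hTf⟩ => hT ▸ hmin T hTf)

section Finite

variable [Fintype V] [DecidableEq V] [DecidableRel G.Adj]

instance (L F : Finset V) : Decidable (G.IsLeakyFort L F) :=
  inferInstanceAs <| Decidable <|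
    ∀ u ∉ F, u ∉ L → ∀ v ∈ F, G.Adj u v → ∃ w ∈ F, w ≠ v ∧ G.Adj u w

variable (G) in
def leakyForceStep (L T : Finset V) : Finset V :=
  T ∪ ({v | ∃ u ∈ T, u ∉ L ∧ G.Adj u v ∧ ∀ w, G.Adj u w → w ≠ v → w ∈ T} :
    Finset V)

theorem leakyForces_of_mem_iterate_leakyForceStep {L S : Finset V} {n : ℕ} {v : V}
    (hv : v ∈ (G.leakyForceStep L)^[n] S) : G.LeakyForces L S v := by
  induction n generalizing v with
  | zero => exact .init v hv
  | succ n ih =>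
    rw [Function.iterate_succ_apply', leakyForceStep, Finset.mem_union] at hv
    rcases hv with hv | hv
    · exact ih hv
    · obtain ⟨u, hu, huL, huv, hall⟩ := (Finset.mem_filter.1 hv).2
      exact .force u v huL (ih hu) huv fun w huw hwv => ih (hall w huw hwv)

theorem isLeakyForcingSet_of_iterate_leakyForceStep_eq_univ {ℓ : ℕ} (S : Finset V) (n : ℕ)
    (h : ∀ L : Finset V, L.card ≤ ℓ → (G.leakyForceStep L)^[n] S = Finset.univ) :
    G.IsLeakyForcingSet ℓ S := fun L hL v =>
  leakyForces_of_mem_iterate_leakyForceStep (n := n) (by simp [h L hL])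

end Finite

end SimpleGraph

instance (d : ℕ) : DecidableRel (hypercubeGraph d).Adj := fun x y =>
  inferInstanceAs (Decidable (hammingDist x y = 1))

def antipode {d : ℕ} (u : Fin d → Bool) : Fin d → Bool := fun i => !u i

set_option maxRecDepth 10000 in
theorem hypercubeGraph_three_isLeakyFort_pair_of_hammingDist_eq_two :
    ∀ u v : Fin 3 → Bool, hammingDist u v = 2 →
      (hypercubeGraph 3).IsLeakyFort ↑({antipode u, antipode v} : Finset (Fin 3 → Bool))
        ↑({u, v} : Finset (Fin 3 → Bool)) := by
  decide

theorem hypercubeGraph_three_not_isLeakyForcingSet_compl_pair {u v : Fin 3 → Bool}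
    (h : hammingDist u v = 2) : ¬ (hypercubeGraph 3).IsLeakyForcingSet 2 {u, v}ᶜ := by
  refine not_isLeakyForcingSet_of_isLeakyFort _ Finset.card_le_two
    (hypercubeGraph_three_isLeakyFort_pair_of_hammingDist_eq_two u v h) ⟨u, by simp⟩ ?_
  rw [Finset.coe_pair]
  exact disjoint_compl_left

set_option maxRecDepth 10000 in
theorem exists_hammingDist_eq_two_of_three_le_card :
    ∀ T : Finset (Fin 3 → Bool), 3 ≤ T.card →
      ∃ u ∈ T, ∃ v ∈ T, hammingDist u v = 2 := by
  decide

theorem hypercubeGraph_three_six_le_card_of_isLeakyForcingSet {S : Finset (Fin 3 → Bool)}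
    (hS : (hypercubeGraph 3).IsLeakyForcingSet 2 ↑S) : 6 ≤ S.card := by
  by_contra! hlt
  have hcompl : 3 ≤ Sᶜ.card := by
    rw [Finset.card_compl, Fintype.card_pi, Fintype.card_bool, Finset.prod_const,
      Finset.card_univ, Fintype.card_fin]
    omega
  obtain ⟨u, hu, v, hv, huv⟩ := exists_hammingDist_eq_two_of_three_le_card Sᶜ hcompl
  refine hypercubeGraph_three_not_isLeakyForcingSet_compl_pair huv (hS.mono ?_)
  rintro w hw (rfl | rfl)
  exacts [Finset.mem_compl.1 hu hw, Finset.mem_compl.1 hv hw]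

set_option maxRecDepth 10000 in
theorem hypercubeGraph_three_isLeakyForcingSet_compl_antipodal_pair :
    (hypercubeGraph 3).IsLeakyForcingSet 2
      ↑({fun _ => false, fun _ => true}ᶜ : Finset (Fin 3 → Bool)) :=
  isLeakyForcingSet_of_iterate_leakyForceStep_eq_univ _ 3 (by decide)

theorem cube_two_forcing :
    (hypercubeGraph 3).leakyForcingNumber 2 = 6 ∧
    ∀ u v : Fin 3 → Bool, (Finset.univ.filter fun i => u i ≠ v i).card = 2 →
      ¬ (hypercubeGraph 3).IsLeakyForcingSet 2 ({u, v}ᶜ : Set (Fin 3 → Bool)) := by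
  have hcard : ({fun _ => false, fun _ => true}ᶜ : Finset (Fin 3 → Bool)).card = 6 := by decide
  refine ⟨?_, fun _ _ => hypercubeGraph_three_not_isLeakyForcingSet_compl_pair⟩
  rw [← hcard]
  exact leakyForcingNumber_eq _ hypercubeGraph_three_isLeakyForcingSet_compl_antipodal_pair
    fun _ hT => hcard ▸ hypercubeGraph_three_six_le_card_of_isLeakyForcingSet hT
end
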